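/- arXiv:2207.09410 — 9 statements merged into one kernel-verified Lean document; each statement's English description precedes it below -/
import Mathlib

section
/- For every positive integer n, W(n) = ∏_k ℓ_k^{∑_s Q(⌊n/ℓ_k^s⌋)}, where the product is over all k ≥ 1 and the inner sum is over all s ≥ 1 (all but finitely many factors equal 1). -/
open Finset Filter Real

/-- `ell k` is the product of the first `k` primes, `ℓ_k = p_1 ⋯ p_k`. -/
noncomputable def ell (k : ℕ) : ℕ := ∏ i ∈ Finset.range k, Nat.nth Nat.Prime i

/-- `𝒬` is the set of positive integers expressible as `ℓ_1^{b_1} ⋯ ℓ_t^{b_t}`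
for some `t ≥ 1` and non-negative integers `b_1, …, b_t`. -/
def QSet : Set ℕ :=
  {q | ∃ t : ℕ, 1 ≤ t ∧ ∃ b : ℕ → ℕ, q = ∏ k ∈ Finset.range t, ell (k + 1) ^ b k}

/-- `Qfun n = |𝒬 ∩ [n]|`, the number of elements of `𝒬` that are at most `n`. -/
noncomputable def Qfun (n : ℕ) : ℕ := (QSet ∩ Set.Icc 1 n).ncard

open Classical in
/-- `W n = ∏_{m ∈ 𝒬 ∩ [n]} m`. -/
noncomputable def W (n : ℕ) : ℕ :=
  ∏ m ∈ (Finset.Icc 1 n).filter (· ∈ QSet), m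

/-! Every `m ∈ 𝒬` has a unique exponent vector: the exponent of `ℓ_{k+1}` in `m` is
`v_{p_{k+1}}(m) - v_{p_{k+2}}(m)`. Hence `W(n) = ∏_k ℓ_k^{E_k}`, where `E_k` is the sum of these
exponents over `m ∈ 𝒬 ∩ [n]`. Counting layer by layer, `E_k = ∑_{s ≥ 1} #{m ∈ 𝒬 ∩ [n] : m ∈ ℓ_k^s 𝒬}`,
and `q ↦ q ℓ_k^s` maps `𝒬 ∩ [⌊n/ℓ_k^s⌋]` bijectively onto the `s`-th layer, so `E_k = ∑_s Q(⌊n/ℓ_k^s⌋)`. -/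

open Nat (nth)

lemma nth_prime_injective : Function.Injective (nth Nat.Prime) :=
  Nat.nth_injective Nat.infinite_setOfPred_prime

lemma ell_pos (k : ℕ) : 0 < ell k :=
  prod_pos fun i _ => (Nat.prime_nth_prime i).pos

lemma two_pow_le_ell (k : ℕ) : 2 ^ k ≤ ell k := by
  simpa [ell] using pow_card_le_prod (range k) _ 2 fun i _ => (Nat.prime_nth_prime i).two_le

lemma add_lt_ell_succ_pow (k s : ℕ) : k + s < ell (k + 1) ^ (s + 1) :=
  calc k + s < 2 ^ (k + s) := Nat.lt_two_pow_self
    _ ≤ 2 ^ ((k + 1) * (s + 1)) := Nat.pow_le_pow_right two_pos (by nlinarith)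
    _ = (2 ^ (k + 1)) ^ (s + 1) := pow_mul _ _ _
    _ ≤ ell (k + 1) ^ (s + 1) := Nat.pow_le_pow_left (two_pow_le_ell _) _

lemma factorization_ell_nth_prime (k i : ℕ) :
    (ell k).factorization (nth Nat.Prime i) = if i < k then 1 else 0 := by
  rw [ell, Nat.factorization_prod fun j _ => (Nat.prime_nth_prime j).ne_zero,
    Finsupp.finsetSum_apply]
  simp_rw [(Nat.prime_nth_prime _).factorization, Finsupp.single_apply,
    nth_prime_injective.eq_iff]
  simp [Finset.sum_ite_eq', Finset.mem_range]

noncomputable def ellProd (b : ℕ →₀ ℕ) : ℕ := b.prod fun j e => ell (j + 1) ^ e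

lemma ellProd_add (b c : ℕ →₀ ℕ) : ellProd (b + c) = ellProd b * ellProd c :=
  Finsupp.prod_add_index' (fun _ => pow_zero _) fun _ _ _ => pow_add _ _ _

lemma ellProd_single (k e : ℕ) : ellProd (Finsupp.single k e) = ell (k + 1) ^ e :=
  Finsupp.prod_single_index (pow_zero _)

lemma ellProd_pos (b : ℕ →₀ ℕ) : 0 < ellProd b :=
  prod_pos fun _ _ => pow_pos (ell_pos _) _

lemma mem_QSet_iff {q : ℕ} : q ∈ QSet ↔ ∃ b, ellProd b = q := by
  constructor
  · rintro ⟨t, -, b, rfl⟩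
    refine ⟨∑ j ∈ range t, Finsupp.single j (b j), ?_⟩
    rw [ellProd, ← Finsupp.prod_finsetSum_index (fun _ => pow_zero _) fun _ _ _ => pow_add _ _ _]
    exact prod_congr rfl fun j _ => Finsupp.prod_single_index (pow_zero _)
  · rintro ⟨b, rfl⟩
    refine ⟨b.support.sup id + 1, le_add_self, b, Finsupp.prod_of_support_subset b ?_ _
      fun _ _ => pow_zero _⟩
    exact fun j hj => mem_range.2 (Nat.lt_succ_of_le (le_sup (f := id) hj))

lemma pos_of_mem_QSet {q : ℕ} (hq : q ∈ QSet) : 0 < q := by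
  obtain ⟨b, rfl⟩ := mem_QSet_iff.1 hq
  exact ellProd_pos b

lemma factorization_ellProd (b : ℕ →₀ ℕ) (i : ℕ) :
    (ellProd b).factorization (nth Nat.Prime i) = ∑ j ∈ b.support, if i ≤ j then b j else 0 := by
  rw [ellProd, Finsupp.prod, Nat.factorization_prod fun j _ => pow_ne_zero _ (ell_pos _).ne',
    Finsupp.finsetSum_apply]
  refine sum_congr rfl fun j _ => ?_
  rw [Nat.factorization_pow, Finsupp.smul_apply, factorization_ell_nth_prime]
  split_ifs <;> simp <;> omega

/-- `nth Nat.Prime k` is `p_{k+1}`, which divides exactly `ℓ_{k+1}, ℓ_{k+2}, …`; so on `𝒬` this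
difference of valuations is the exponent of `ℓ_{k+1}`. -/
noncomputable def ellExponent (k m : ℕ) : ℕ :=
  m.factorization (nth Nat.Prime k) - m.factorization (nth Nat.Prime (k + 1))

lemma ellExponent_ellProd (b : ℕ →₀ ℕ) (k : ℕ) : ellExponent k (ellProd b) = b k := by
  have hsplit (j : ℕ) : (if k ≤ j then b j else 0)
      = (if k + 1 ≤ j then b j else 0) + if k = j then b j else 0 := by
    split_ifs <;> omega
  rw [ellExponent, factorization_ellProd, factorization_ellProd, sum_congr rfl fun j _ => hsplit j,
    sum_add_distrib, sum_ite_eq, Nat.add_sub_cancel_left]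
  simp [Finsupp.mem_support_iff, eq_comm]

lemma ellExponent_eq_zero_of_lt {k m : ℕ} (h : m < nth Nat.Prime k) : ellExponent k m = 0 := by
  simp [ellExponent, Nat.factorization_eq_zero_of_lt h]

lemma ellExponent_lt_self {m : ℕ} (hm : m ≠ 0) (k : ℕ) : ellExponent k m < m :=
  (Nat.sub_le _ _).trans_lt (Nat.factorization_lt _ hm)

lemma prod_range_ell_pow_ellExponent {m n : ℕ} (hm : m ∈ QSet) (hmn : m ≤ n) :
    ∏ k ∈ range n, ell (k + 1) ^ ellExponent k m = m := by
  obtain ⟨b, rfl⟩ := mem_QSet_iff.1 hm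
  simp_rw [ellExponent_ellProd]
  refine (Finsupp.prod_of_support_subset b (fun k hk => ?_) _ fun _ _ => pow_zero _).symm
  by_contra hkn
  have hlt : ellProd b < nth Nat.Prime k := by
    have := Nat.add_two_le_nth_prime k
    simp only [mem_range] at hkn
    omega
  exact Finsupp.mem_support_iff.1 hk (ellExponent_ellProd b k ▸ ellExponent_eq_zero_of_lt hlt)

lemma mul_ell_pow_mem_QSet {q : ℕ} (hq : q ∈ QSet) (k a : ℕ) : q * ell (k + 1) ^ a ∈ QSet := by
  obtain ⟨b, rfl⟩ := mem_QSet_iff.1 hq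
  exact mem_QSet_iff.2 ⟨b + Finsupp.single k a, by rw [ellProd_add, ellProd_single]⟩

lemma ellExponent_mul_ell_pow {q : ℕ} (hq : q ∈ QSet) (k a : ℕ) :
    ellExponent k (q * ell (k + 1) ^ a) = ellExponent k q + a := by
  obtain ⟨b, rfl⟩ := mem_QSet_iff.1 hq
  rw [← ellProd_single, ← ellProd_add, ellExponent_ellProd, ellExponent_ellProd]
  simp

lemma exists_mul_ell_pow_of_le_ellExponent {m k a : ℕ} (hm : m ∈ QSet)
    (h : a ≤ ellExponent k m) : ∃ q ∈ QSet, q * ell (k + 1) ^ a = m := by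
  obtain ⟨b, rfl⟩ := mem_QSet_iff.1 hm
  rw [ellExponent_ellProd] at h
  refine ⟨ellProd (b - Finsupp.single k a), mem_QSet_iff.2 ⟨_, rfl⟩, ?_⟩
  rw [← ellProd_single, ← ellProd_add, tsub_add_cancel_of_le (Finsupp.single_le_iff.2 h)]

lemma sum_eq_sum_range_card_filter_lt {ι : Type*} (s : Finset ι) (f : ι → ℕ) {N : ℕ}
    (hf : ∀ i ∈ s, f i ≤ N) : ∑ i ∈ s, f i = ∑ j ∈ range N, #{i ∈ s | j < f i} := by
  simp_rw [card_filter]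
  rw [sum_comm]
  refine sum_congr rfl fun i hi => ?_
  have hfilter : {j ∈ range N | j < f i} = range (f i) := by
    ext j
    simp only [mem_filter, mem_range]
    have := hf i hi
    omega
  rw [← card_filter, hfilter, card_range]

lemma Qfun_zero : Qfun 0 = 0 := by
  simp [Qfun]

open Classical in
lemma Qfun_eq_card (r : ℕ) : Qfun r = #{m ∈ Icc 1 r | m ∈ QSet} := by
  rw [Qfun, ← Set.ncard_coe_finset]
  congr 1
  ext m
  simp only [Set.mem_inter_iff, Set.mem_Icc, coe_filter, mem_Icc, Set.mem_ofPred_eq]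
  tauto

open Classical in
lemma card_filter_le_ellExponent (n k a : ℕ) :
    #{m ∈ {m ∈ Icc 1 n | m ∈ QSet} | a ≤ ellExponent k m} = Qfun (n / ell (k + 1) ^ a) := by
  have hL : 0 < ell (k + 1) ^ a := pow_pos (ell_pos _) _
  rw [Qfun_eq_card]
  refine (card_nbij (· * ell (k + 1) ^ a) (fun q hq => ?_)
    (fun q _ r _ h => Nat.eq_of_mul_eq_mul_right hL h) fun m hm => ?_).symm
  · simp only [mem_coe, mem_filter, mem_Icc] at hq ⊢
    obtain ⟨⟨-, hqn⟩, hq⟩ := hq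
    refine ⟨⟨⟨Nat.mul_pos (pos_of_mem_QSet hq) hL, (Nat.le_div_iff_mul_le hL).1 hqn⟩,
      mul_ell_pow_mem_QSet hq k a⟩, ?_⟩
    rw [ellExponent_mul_ell_pow hq]
    omega
  · simp only [mem_coe, mem_filter, mem_Icc] at hm
    obtain ⟨⟨⟨-, hmn⟩, hm⟩, ha⟩ := hm
    obtain ⟨q, hq, rfl⟩ := exists_mul_ell_pow_of_le_ellExponent hm ha
    exact ⟨q, mem_filter.2 ⟨mem_Icc.2 ⟨pos_of_mem_QSet hq, (Nat.le_div_iff_mul_le hL).2 hmn⟩, hq⟩,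
      rfl⟩

open Classical in
lemma sum_ellExponent (n k : ℕ) :
    ∑ m ∈ {m ∈ Icc 1 n | m ∈ QSet}, ellExponent k m
      = ∑ s ∈ range n, Qfun (n / ell (k + 1) ^ (s + 1)) := by
  rw [sum_eq_sum_range_card_filter_lt _ _ (N := n) fun m hm => ?_]
  · exact sum_congr rfl fun s _ => card_filter_le_ellExponent n k (s + 1)
  · simp only [mem_filter, mem_Icc] at hm
    exact (ellExponent_lt_self (by omega) k).le.trans hm.1.2

lemma Qfun_div_ell_pow_eq_zero {n k s : ℕ} (h : n ≤ k + s) :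
    Qfun (n / ell (k + 1) ^ (s + 1)) = 0 := by
  rw [Nat.div_eq_of_lt (h.trans_lt (add_lt_ell_succ_pow k s)), Qfun_zero]

theorem W_recurrence_general (n : ℕ) :
    W n = ∏' k : ℕ, ell (k + 1) ^ (∑' s : ℕ, Qfun (n / ell (k + 1) ^ (s + 1))) := by
  classical
  have htsum (k : ℕ) : ∑' s, Qfun (n / ell (k + 1) ^ (s + 1))
      = ∑ s ∈ range n, Qfun (n / ell (k + 1) ^ (s + 1)) :=
    tsum_eq_sum fun s hs => Qfun_div_ell_pow_eq_zero (by simp at hs; omega)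
  rw [tprod_eq_prod (s := range n) fun k hk => ?_]
  · calc W n = ∏ m ∈ {m ∈ Icc 1 n | m ∈ QSet}, ∏ k ∈ range n, ell (k + 1) ^ ellExponent k m :=
          prod_congr rfl fun m hm => by
            simp only [mem_filter, mem_Icc] at hm
            exact (prod_range_ell_pow_ellExponent hm.2 hm.1.2).symm
      _ = ∏ k ∈ range n, ell (k + 1) ^ ∑ m ∈ {m ∈ Icc 1 n | m ∈ QSet}, ellExponent k m := by
          rw [Finset.prod_comm]
          simp_rw [prod_pow_eq_pow_sum]
      _ = _ := by simp_rw [sum_ellExponent, htsum]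
  · simp only [mem_range, not_lt] at hk
    rw [tsum_congr fun s => Qfun_div_ell_pow_eq_zero (by omega), tsum_zero, pow_zero]

/-- The pseudo-recurrence: `W(n) = ∏_{k ≥ 1} ℓ_k^{∑_{s ≥ 1} Q(⌊n/ℓ_k^s⌋)}`
(all but finitely many factors equal `1`). -/
theorem W_recurrence (n : ℕ) (hn : 0 < n) :
    W n = ∏' k : ℕ, ell (k + 1) ^ (∑' s : ℕ, Qfun (n / ell (k + 1) ^ (s + 1))) :=
  W_recurrence_general n
end

section
/- For every δ with 0 < δ < 1, ∑_{k=1}^∞ ℓ_k^{-δ} = 1/(2^δ − 1) − ∑_{k=1}^∞ ∫_{p_k}^{p_{k+1}} δ·x^{δ−1}·e^{−δ·ϑ(p_k)}/(x^δ − 1)² dx. -/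
open Finset Filter Real MeasureTheory intervalIntegral

/-- Chebyshev's function `ϑ(x) = ∑_{p ≤ x, p prime} log p`. -/
noncomputable def theta (x : ℝ) : ℝ :=
  ∑ p ∈ (Finset.range (⌊x⌋₊ + 1)).filter Nat.Prime, Real.log p

/-!
With `u k = p_{k+1}^δ` and `P k = ℓ_{k+1}^{-δ} = ∏_{i ≤ k} u i⁻¹`, the integrand has the primitive
`-e^{-δϑ(p_k)} (x^δ - 1)⁻¹` on `[p_k, p_{k+1}]`, so the `k`-th integral is
`P k ((u k - 1)⁻¹ - (u (k+1) - 1)⁻¹)`. Since `P k = P (k+1) u (k+1)` and `u/(u-1) = 1/(u-1) + 1`,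
summing these terms telescopes to `P 0 (u 0 - 1)⁻¹ - ∑_{k≥1} P k`, and `P 0 = 2^{-δ}` gives the
identity.
The series converge because `u k ≥ 2^δ > 1`, so `P` is dominated by a geometric series.
-/

theorem theta_nth_prime (k : ℕ) : theta (Nat.nth Nat.Prime k) = Real.log (ell (k + 1)) := by
  have hprimes : {p ∈ range (Nat.nth Nat.Prime k + 1) | p.Prime} =
      (range (k + 1)).image (Nat.nth Nat.Prime) := by
    ext p
    simp only [mem_filter, mem_range, mem_image, Nat.lt_succ_iff]
    constructor
    · rintro ⟨hle, hp⟩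
      exact ⟨Nat.count Nat.Prime p, Nat.le_nth_of_count_le hle, Nat.nth_count hp⟩
    · rintro ⟨i, hi, rfl⟩
      exact ⟨(Nat.nth_le_nth Nat.infinite_setOfPred_prime).2 hi, Nat.prime_nth_prime i⟩
  rw [theta, Nat.floor_natCast, hprimes,
    sum_image fun i _ j _ h => Nat.nth_injective Nat.infinite_setOfPred_prime h,
    ell, Nat.cast_prod, Real.log_prod fun i _ => by exact_mod_cast (Nat.prime_nth_prime i).ne_zero]

theorem ell_rpow_neg (δ : ℝ) (k : ℕ) :
    (ell k : ℝ) ^ (-δ) = ∏ i ∈ range k, ((Nat.nth Nat.Prime i : ℝ) ^ δ)⁻¹ := by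
  rw [ell, Nat.cast_prod, rpow_neg (by positivity), ← Real.finsetProd_rpow _ _ (by simp),
    prod_inv_distrib]

theorem exp_neg_mul_theta_nth_prime (δ : ℝ) (k : ℕ) :
    exp (-δ * theta (Nat.nth Nat.Prime k)) = (ell (k + 1) : ℝ) ^ (-δ) := by
  have hℓ : (0 : ℝ) < ell (k + 1) := by
    exact_mod_cast prod_pos fun i _ => (Nat.prime_nth_prime i).pos
  rw [theta_nth_prime, rpow_def_of_pos hℓ, mul_comm]

theorem integral_mul_rpow_div_rpow_sub_one_sq {δ a b : ℝ} (hδ : 0 < δ) (ha : 1 < a) (hb : 1 < b)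
    (c : ℝ) :
    ∫ x in a..b, δ * x ^ (δ - 1) * c / (x ^ δ - 1) ^ 2 = c * ((a ^ δ - 1)⁻¹ - (b ^ δ - 1)⁻¹) := by
  have hx : ∀ x ∈ Set.uIcc a b, 1 < x := fun x hxab => lt_of_lt_of_le (lt_min ha hb) hxab.1
  have hx0 : ∀ x ∈ Set.uIcc a b, x ≠ 0 := fun x hxab => (zero_lt_one.trans (hx x hxab)).ne'
  have hne : ∀ x ∈ Set.uIcc a b, x ^ δ - 1 ≠ 0 := fun x hxab =>
    sub_ne_zero.2 (one_lt_rpow (hx x hxab) hδ).ne'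
  have hderiv : ∀ x ∈ Set.uIcc a b, HasDerivAt (fun y => -c * (y ^ δ - 1)⁻¹)
      (δ * x ^ (δ - 1) * c / (x ^ δ - 1) ^ 2) x := by
    intro x hxab
    have h := (((hasDerivAt_rpow_const (p := δ) (Or.inl (hx0 x hxab))).sub_const 1).inv
      (hne x hxab)).const_mul (-c)
    exact h.congr_deriv (by ring)
  have hcont : ContinuousOn (fun x => δ * x ^ (δ - 1) * c / (x ^ δ - 1) ^ 2) (Set.uIcc a b) := by
    exact ContinuousOn.div (by fun_prop (disch := assumption)) (by fun_prop (disch := assumption))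
      fun x hxab => pow_ne_zero 2 (hne x hxab)
  rw [integral_eq_sub_of_hasDerivAt hderiv hcont.intervalIntegrable]
  ring

section InvProducts

variable {u : ℕ → ℝ} {c : ℝ}

theorem prod_range_inv_le_inv_pow (hc : 0 < c) (hu : ∀ k, c ≤ u k) (k : ℕ) :
    ∏ i ∈ range k, (u i)⁻¹ ≤ c⁻¹ ^ k := by
  calc ∏ i ∈ range k, (u i)⁻¹ ≤ ∏ _i ∈ range k, c⁻¹ :=
        prod_le_prod (fun i _ => inv_nonneg.2 (hc.le.trans (hu i)))
          fun i _ => inv_anti₀ hc (hu i)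
    _ = c⁻¹ ^ k := by rw [prod_const, card_range]

theorem summable_prod_range_inv (hc : 1 < c) (hu : ∀ k, c ≤ u k) :
    Summable fun k => ∏ i ∈ range k, (u i)⁻¹ :=
  Summable.of_nonneg_of_le
    (fun k => prod_nonneg fun i _ => inv_nonneg.2 (zero_le_one.trans (hc.le.trans (hu i))))
    (prod_range_inv_le_inv_pow (zero_lt_one.trans hc) hu)
    (summable_geometric_of_lt_one (by positivity) (inv_lt_one_of_one_lt₀ hc))

theorem tsum_prod_range_succ_inv (hc : 1 < c) (hu : ∀ k, c ≤ u k) :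
    ∑' k, ∏ i ∈ range (k + 1), (u i)⁻¹ = (u 0 - 1)⁻¹ -
      ∑' k, (∏ i ∈ range (k + 1), (u i)⁻¹) * ((u k - 1)⁻¹ - (u (k + 1) - 1)⁻¹) := by
  set P : ℕ → ℝ := fun k => ∏ i ∈ range (k + 1), (u i)⁻¹ with hP_def
  set b : ℕ → ℝ := fun k => (u k - 1)⁻¹ with hb_def
  have hu1 : ∀ k, 1 < u k := fun k => hc.trans_le (hu k)
  have hP_nonneg : ∀ k, 0 ≤ P k := fun k =>
    prod_nonneg fun i _ => inv_nonneg.2 (zero_le_one.trans (hu1 i).le)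
  have hb_nonneg : ∀ k, 0 ≤ b k := fun k => inv_nonneg.2 (sub_nonneg.2 (hu1 k).le)
  have hb_le : ∀ k, b k ≤ (c - 1)⁻¹ := fun k => inv_anti₀ (sub_pos.2 hc) (by linarith [hu k])
  have hP : Summable P := (summable_nat_add_iff (f := fun k => ∏ i ∈ range k, (u i)⁻¹) 1).2
    (summable_prod_range_inv hc hu)
  have hPb : ∀ g : ℕ → ℕ, Summable fun k => P k * b (g k) := fun g =>
    Summable.of_nonneg_of_le (fun k => mul_nonneg (hP_nonneg k) (hb_nonneg _))
      (fun k => mul_le_mul_of_nonneg_left (hb_le _) (hP_nonneg k)) (hP.mul_right _)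
  have hPb0 : Summable fun k => P k * b k := hPb id
  have hPb1 : Summable fun k => P k * b (k + 1) := hPb (· + 1)
  -- `u / (u - 1) = 1 / (u - 1) + 1` shifts the weight `b (k + 1)` from `P k` to `P (k + 1)`.
  have hshift : ∀ k, P k * b (k + 1) = P (k + 1) * b (k + 1) + P (k + 1) := fun k => by
    have h0 : u (k + 1) ≠ 0 := (zero_lt_one.trans (hu1 (k + 1))).ne'
    have h1 : u (k + 1) - 1 ≠ 0 := sub_ne_zero.2 (hu1 (k + 1)).ne'
    simp only [hP_def, hb_def, prod_range_succ _ (k + 1)]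
    field_simp
    ring
  have hsum : ∑' k, P k * (b k - b (k + 1)) = P 0 * b 0 - ∑' k, P (k + 1) := by
    simp_rw [mul_sub]
    rw [hPb0.tsum_sub hPb1, tsum_congr hshift,
      ((summable_nat_add_iff (f := fun k => P k * b k) 1).2 hPb0).tsum_add
        ((summable_nat_add_iff (f := P) 1).2 hP),
      hPb0.tsum_eq_zero_add]
    ring
  have h0 : u 0 ≠ 0 := (zero_lt_one.trans (hu1 0)).ne'
  have h1 : u 0 - 1 ≠ 0 := sub_ne_zero.2 (hu1 0).ne'
  have hP0 : P 0 = (u 0)⁻¹ := by simp [hP_def]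
  rw [hsum, hP.tsum_eq_zero_add, hP0, hb_def]
  field_simp
  ring

end InvProducts

theorem hardy_ramanujan_identity_general (δ : ℝ) (hδ : 0 < δ) :
    ∑' k : ℕ, (ell (k + 1) : ℝ) ^ (-δ) =
      1 / (2 ^ δ - 1) -
        ∑' k : ℕ, ∫ x in (Nat.nth Nat.Prime k : ℝ)..(Nat.nth Nat.Prime (k + 1) : ℝ),
          δ * x ^ (δ - 1) * Real.exp (-δ * theta (Nat.nth Nat.Prime k)) / (x ^ δ - 1) ^ 2 := by
  have htwo : ∀ k, (2 : ℝ) ≤ Nat.nth Nat.Prime k := fun k => by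
    exact_mod_cast (Nat.prime_nth_prime k).two_le
  have hint : ∀ k, (∫ x in (Nat.nth Nat.Prime k : ℝ)..(Nat.nth Nat.Prime (k + 1) : ℝ),
      δ * x ^ (δ - 1) * Real.exp (-δ * theta (Nat.nth Nat.Prime k)) / (x ^ δ - 1) ^ 2) =
        (∏ i ∈ range (k + 1), ((Nat.nth Nat.Prime i : ℝ) ^ δ)⁻¹) *
          (((Nat.nth Nat.Prime k : ℝ) ^ δ - 1)⁻¹ - ((Nat.nth Nat.Prime (k + 1) : ℝ) ^ δ - 1)⁻¹) :=
    fun k => by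
      rw [integral_mul_rpow_div_rpow_sub_one_sq hδ (one_lt_two.trans_le (htwo k))
        (one_lt_two.trans_le (htwo (k + 1))), exp_neg_mul_theta_nth_prime, ell_rpow_neg]
  simp_rw [ell_rpow_neg, hint]
  rw [tsum_prod_range_succ_inv (one_lt_rpow one_lt_two hδ)
      fun k => rpow_le_rpow zero_le_two (htwo k) hδ.le,
    Nat.nth_prime_zero_eq_two, one_div, Nat.cast_ofNat]

/-- The Hardy–Ramanujan identity: for `0 < δ < 1`,
`∑_{k≥1} ℓ_k^{-δ} = 1/(2^δ - 1) - ∑_{k≥1} ∫_{p_k}^{p_{k+1}} δ x^{δ-1} e^{-δ ϑ(p_k)}/(x^δ-1)² dx`. -/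
theorem hardy_ramanujan_identity (δ : ℝ) (hδ : 0 < δ) (hδ' : δ < 1) :
    ∑' k : ℕ, (ell (k + 1) : ℝ) ^ (-δ) =
      1 / (2 ^ δ - 1) -
        ∑' k : ℕ, ∫ x in (Nat.nth Nat.Prime k : ℝ)..(Nat.nth Nat.Prime (k + 1) : ℝ),
          δ * x ^ (δ - 1) * Real.exp (-δ * theta (Nat.nth Nat.Prime k)) / (x ^ δ - 1) ^ 2 :=
  hardy_ramanujan_identity_general δ hδ
end

section
/- For every real m ≥ 10³ and every real x with 0 ≤ x ≤ m/10, f(m − x) ≥ f(m) − x·f'(m) + x²·f''(m), where f(t) = √(t/log t), f'(t) = (1 − 1/log(t))/(2√(t·log t)), and f''(t) = (−1 + 3/log²(t))/(4t·√(t·log t)). -/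
/-!
By Taylor's theorem, `f (m - x) = f m - x f' m + x² f'' ξ / 2` for some `ξ ∈ [m - x, m]`,
so it suffices that `f'' ξ ≥ 2 f'' m` for `ξ ≥ 9m/10`. Since `log ≥ 6` there,
`f'' m ≤ -(11/12) / D m` and `f'' ξ ≥ -1 / D ξ` with `D t = 4t√(t log t)`;
finally `11 D ξ ≥ 6 D m`, as `ξ ≥ 0.9 m` and `log ξ ≥ log m - 1/9`.
-/

open Real Set

theorem taylor_quadratic_le_of_le_second_deriv {f f' f'' : ℝ → ℝ} {a b c : ℝ}
    (hab : a ≤ b) (hf : ∀ t ∈ Icc a b, HasDerivAt f (f' t) t)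
    (hf' : ∀ t ∈ Icc a b, HasDerivAt f' (f'' t) t)
    (hc : ∀ t ∈ Icc a b, c ≤ f'' t) :
    f b + f' b * (a - b) + c / 2 * (a - b) ^ 2 ≤ f a := by
  set g' : ℝ → ℝ := fun t => f' t - f' b - c * (t - b)
  set g : ℝ → ℝ := fun t => f t - f b - f' b * (t - b) - c / 2 * (t - b) ^ 2
  have hg' : ∀ t ∈ Icc a b, HasDerivAt g' (f'' t - c) t := fun t ht => by
    simpa using ((hf' t ht).sub_const (f' b)).fun_sub
      (((hasDerivAt_id' t).sub_const b).const_mul c)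
  have hg : ∀ t ∈ Icc a b, HasDerivAt g (g' t) t := fun t ht => by
    have := (((hf t ht).sub_const (f b)).fun_sub
      (((hasDerivAt_id' t).sub_const b).const_mul (f' b))).fun_sub
      ((((hasDerivAt_id' t).sub_const b).fun_pow 2).const_mul (c / 2))
    exact this.congr_deriv (by simp only [g']; push_cast; ring)
  have hg'_mono : MonotoneOn g' (Icc a b) :=
    monotoneOn_of_hasDerivWithinAt_nonneg (convex_Icc a b)
      (fun t ht => (hg' t ht).continuousAt.continuousWithinAt)
      (fun t ht => (hg' t (interior_subset ht)).hasDerivWithinAt)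
      (fun t ht => sub_nonneg.2 (hc t (interior_subset ht)))
  have hg'_nonpos : ∀ t ∈ Icc a b, g' t ≤ 0 := fun t ht => by
    simpa [g'] using hg'_mono ht ⟨hab, le_rfl⟩ ht.2
  have hg_anti : AntitoneOn g (Icc a b) :=
    antitoneOn_of_hasDerivWithinAt_nonpos (convex_Icc a b)
      (fun t ht => (hg t ht).continuousAt.continuousWithinAt)
      (fun t ht => (hg t (interior_subset ht)).hasDerivWithinAt)
      (fun t ht => hg'_nonpos t (interior_subset ht))
  have := hg_anti ⟨le_rfl, hab⟩ ⟨hab, le_rfl⟩ hab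
  simp only [g, sub_self] at this
  linarith

namespace SqrtDivLog

noncomputable def f (t : ℝ) : ℝ := √(t / log t)

noncomputable def f' (t : ℝ) : ℝ := (1 - 1 / log t) / (2 * √(t * log t))

noncomputable def f'' (t : ℝ) : ℝ := (-1 + 3 / log t ^ 2) / (4 * t * √(t * log t))

theorem hasDerivAt_f {t : ℝ} (ht : 1 < t) : HasDerivAt f (f' t) t := by
  have ht0 : 0 < t := by linarith
  have hL : 0 < log t := log_pos ht
  have hquot : HasDerivAt (fun s => s / log s) ((log t - 1) / log t ^ 2) t :=
    ((hasDerivAt_id' t).div (hasDerivAt_log ht0.ne') hL.ne').congr_deriv (by field_simp)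
  refine ((hasDerivAt_sqrt (div_pos ht0 hL).ne').comp t hquot).congr_deriv ?_
  rw [f', sqrt_div ht0.le, sqrt_mul ht0.le]
  have hsq : √(log t) ^ 2 = log t := sq_sqrt hL.le
  have : 0 < √t := sqrt_pos.2 ht0
  have : 0 < √(log t) := sqrt_pos.2 hL
  field_simp
  linear_combination (log t - 1) * hsq

theorem hasDerivAt_f' {t : ℝ} (ht : 1 < t) : HasDerivAt f' (f'' t) t := by
  have ht0 : 0 < t := by linarith
  have hL : 0 < log t := log_pos ht
  have htL : 0 < t * log t := mul_pos ht0 hL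
  have hnum : HasDerivAt (fun s => 1 - 1 / log s) (1 / (t * log t ^ 2)) t :=
    ((hasDerivAt_const t 1).fun_sub ((hasDerivAt_const t 1).div (hasDerivAt_log ht0.ne') hL.ne')
      ).congr_deriv (by field_simp; ring)
  have hprod : HasDerivAt (fun s => s * log s) (log t + 1) t :=
    ((hasDerivAt_id' t).fun_mul (hasDerivAt_log ht0.ne')).congr_deriv (by field_simp)
  have hden :
      HasDerivAt (fun s => 2 * √(s * log s)) (2 * ((log t + 1) / (2 * √(t * log t)))) t :=
    (((hasDerivAt_sqrt htL.ne').comp t hprod).const_mul 2).congr_deriv (by ring)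
  refine (hnum.fun_div hden (by positivity)).congr_deriv ?_
  rw [f'']
  have hS : 0 < √(t * log t) := sqrt_pos.2 htL
  field_simp
  linear_combination (4 * log t ^ 2 - 4) * sq_sqrt htL.le

theorem six_lt_log {t : ℝ} (ht : 900 ≤ t) : 6 < log t := by
  rw [lt_log_iff_exp_lt (by linarith)]
  calc exp 6 = exp 1 ^ 6 := by rw [← exp_nat_mul]; norm_num
    _ < 2.7182818286 ^ 6 := by gcongr; exact exp_one_lt_d9
    _ < t := by linarith [show (2.7182818286 : ℝ) ^ 6 < 900 by norm_num]

theorem f''_le {t : ℝ} (ht : 900 ≤ t) : f'' t ≤ -(11 / 12) / (4 * t * √(t * log t)) := by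
  have hL := six_lt_log ht
  have hnum : -1 + 3 / log t ^ 2 ≤ -(11 / 12) := by
    have : 3 / log t ^ 2 ≤ 3 / 6 ^ 2 := by gcongr
    linarith
  unfold f''
  gcongr

theorem neg_le_f'' {t : ℝ} (ht : 1 < t) : -1 / (4 * t * √(t * log t)) ≤ f'' t := by
  have : 0 < t * log t := mul_pos (by linarith) (log_pos ht)
  unfold f''
  gcongr
  linarith [show 0 ≤ 3 / log t ^ 2 by positivity]

theorem mul_sqrt_mul_log_le {m y : ℝ} (hm : 900 ≤ m) (hy : 9 * m / 10 ≤ y) :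
    6 * m * √(m * log m) ≤ 11 * y * √(y * log y) := by
  have hy0 : 0 < y := by linarith
  have hLm := six_lt_log hm
  have hlog : log m - log y ≤ 1 / 9 := by
    rw [← log_div (by linarith) hy0.ne']
    have : m / y ≤ 10 / 9 := by rw [div_le_div_iff₀ hy0 (by norm_num)]; linarith
    linarith [log_le_sub_one_of_pos (show 0 < m / y by positivity)]
  have hcube : (6 * m) ^ 2 * (m * log m) ≤ (11 * y) ^ 2 * (y * log y) := by
    have hy3 : (9 / 10 * m) ^ 3 ≤ y ^ 3 := by gcongr; linarith
    nlinarith [pow_pos hy0 3]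
  calc 6 * m * √(m * log m) = √((6 * m) ^ 2 * (m * log m)) := by
        rw [sqrt_mul (sq_nonneg _), sqrt_sq (by positivity)]
    _ ≤ √((11 * y) ^ 2 * (y * log y)) := sqrt_le_sqrt hcube
    _ = 11 * y * √(y * log y) := by rw [sqrt_mul (sq_nonneg _), sqrt_sq (by positivity)]

theorem two_mul_f''_le {m y : ℝ} (hm : 1000 ≤ m) (hy : 9 * m / 10 ≤ y) :
    2 * f'' m ≤ f'' y := by
  have hy0 : 0 < y := by linarith
  have hSm : 0 < √(m * log m) := sqrt_pos.2 (mul_pos (by linarith) (log_pos (by linarith)))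
  have hSy : 0 < √(y * log y) := sqrt_pos.2 (mul_pos hy0 (log_pos (by linarith)))
  have hcmp := mul_sqrt_mul_log_le (by linarith) hy
  calc 2 * f'' m ≤ 2 * (-(11 / 12) / (4 * m * √(m * log m))) := by
        gcongr; exact f''_le (by linarith)
    _ ≤ -1 / (4 * y * √(y * log y)) := by
        rw [mul_div_assoc', div_le_div_iff₀ (by positivity) (by positivity)]
        nlinarith
    _ ≤ f'' y := neg_le_f'' (by linarith)

end SqrtDivLog

/-- Second-order bound: for `m ≥ 10³` and `0 ≤ x ≤ m/10`,
`f(m-x) ≥ f(m) - x f'(m) + x² f''(m)` where `f(t) = √(t/log t)`,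
`f'(t) = (1 - 1/log t)/(2√(t log t))` and `f''(t) = (-1 + 3/log² t)/(4t√(t log t))`. -/
theorem f_second_order_lower (m x : ℝ) (hm : 10 ^ 3 ≤ m) (hx : 0 ≤ x) (hxm : x ≤ m / 10) :
    Real.sqrt ((m - x) / Real.log (m - x)) ≥
      Real.sqrt (m / Real.log m) -
        x * ((1 - 1 / Real.log m) / (2 * Real.sqrt (m * Real.log m))) +
        x ^ 2 * ((-1 + 3 / Real.log m ^ 2) / (4 * m * Real.sqrt (m * Real.log m))) := by
  have hm' : (1000 : ℝ) ≤ m := by norm_num at hm; exact hm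
  have hIcc : ∀ t ∈ Icc (m - x) m, 9 * m / 10 ≤ t := fun t ht => by linarith [ht.1]
  have htaylor := taylor_quadratic_le_of_le_second_deriv (c := 2 * SqrtDivLog.f'' m)
    (by linarith : m - x ≤ m)
    (fun t ht => SqrtDivLog.hasDerivAt_f (by linarith [hIcc t ht]))
    (fun t ht => SqrtDivLog.hasDerivAt_f' (by linarith [hIcc t ht]))
    (fun t ht => SqrtDivLog.two_mul_f''_le hm' (hIcc t ht))
  change SqrtDivLog.f (m - x) ≥
    SqrtDivLog.f m - x * SqrtDivLog.f' m + x ^ 2 * SqrtDivLog.f'' m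
  linarith
end

section
/- For every real z > 0, 1/z² − 1/12 ≤ e^z/(e^z − 1)² ≤ 1/z². -/
/-!
Since `2 (cosh z - 1) = (e^z - 1)² / e^z`, both bounds are bounds on `cosh z - 1`. The upper bound
is `z² / 2 ≤ cosh z - 1`, the first term of the Taylor series. For the lower bound, the coefficient
of `z^(2k)` in `(12 - z²) (cosh z - 1)` is `(12 - 2k (2k - 1)) / (2k)!`, which is `6` for `k = 1`
and nonpositive for `k ≥ 2`, so `(12 - z²) (cosh z - 1) ≤ 6 z²`.
-/

open scoped Nat

namespace Real

lemma sq_mul_pow_two_mul_div_factorial (x : ℝ) (n : ℕ) :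
    x ^ 2 * (x ^ (2 * n) / (2 * n)!) =
      (2 * n + 1) * (2 * n + 2) * (x ^ (2 * (n + 1)) / (2 * (n + 1))!) := by
  rw [show 2 * (n + 1) = 2 * n + 1 + 1 by ring, Nat.factorial_succ, Nat.factorial_succ]
  push_cast
  field_simp
  ring

lemma hasSum_cosh_sub_one (x : ℝ) :
    HasSum (fun n ↦ x ^ (2 * (n + 1)) / (2 * (n + 1))!) (cosh x - 1) := by
  simpa using (hasSum_nat_add_iff' 1).mpr (hasSum_cosh x)

lemma one_add_sq_div_two_le_cosh (x : ℝ) : 1 + x ^ 2 / 2 ≤ cosh x := by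
  have h := sum_le_hasSum (Finset.range 2)
    (fun n _ ↦ div_nonneg ((even_two_mul n).pow_nonneg x) (by positivity)) (hasSum_cosh x)
  simpa [Finset.sum_range_succ] using h

lemma cosh_sub_one_mul_le (x : ℝ) : (cosh x - 1) * (12 - x ^ 2) ≤ 6 * x ^ 2 := by
  have hsq : HasSum (fun n : ℕ ↦ (2 * n + 1) * (2 * n + 2) * (x ^ (2 * (n + 1)) / (2 * (n + 1))!))
      (x ^ 2 * cosh x) := by
    have h := (hasSum_cosh x).mul_left (x ^ 2)
    simp only [sq_mul_pow_two_mul_div_factorial] at h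
    exact h
  have hdiff := ((hasSum_cosh_sub_one x).mul_left 12).sub hsq
  have hle := hasSum_le (fun n ↦ ?_) hdiff (hasSum_ite_eq 0 (5 * x ^ 2))
  · linarith
  rcases n with _ | m
  · norm_num [Nat.factorial]
    linarith
  · rw [if_neg m.succ_ne_zero, ← sub_mul]
    refine mul_nonpos_of_nonpos_of_nonneg ?_
      (div_nonneg ((even_two_mul _).pow_nonneg x) (by positivity))
    push_cast
    nlinarith

lemma exp_div_exp_sub_one_sq (x : ℝ) : exp x / (exp x - 1) ^ 2 = 1 / (2 * (cosh x - 1)) := by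
  have h : 2 * (cosh x - 1) = (exp x - 1) ^ 2 / exp x := by
    rw [cosh_eq, exp_neg]
    field_simp
    ring
  rw [h, one_div_div]

end Real

/-- For every `z > 0`, `1/z² - 1/12 ≤ e^z/(e^z - 1)² ≤ 1/z²`. -/
theorem exp_inequality_one (z : ℝ) (hz : 0 < z) :
    1 / z ^ 2 - 1 / 12 ≤ Real.exp z / (Real.exp z - 1) ^ 2 ∧
      Real.exp z / (Real.exp z - 1) ^ 2 ≤ 1 / z ^ 2 := by
  rw [Real.exp_div_exp_sub_one_sq]
  have hz2 : 0 < z ^ 2 := by positivity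
  have hcosh_ge := Real.one_add_sq_div_two_le_cosh z
  have hcosh_le := Real.cosh_sub_one_mul_le z
  constructor
  · rw [div_sub_div _ _ hz2.ne' (by norm_num), div_le_div_iff₀ (by positivity) (by linarith)]
    nlinarith
  · exact one_div_le_one_div_of_le hz2 (by linarith)
end

section
/- For every real z > 0, 1/z² − 1/12 ≤ e^z·((e^z + 1)·z − e^z + 1)/(e^z − 1)³ ≤ 1/z² + 1. -/
/-!
Cleared of denominators, each inequality says that an exponential polynomial
`F(z) = p₃(z) e^{3z} + p₂(z) e^{2z} + p₁(z) e^z + p₀(z)`, with polynomials `pᵢ` of degree at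
most three, is nonnegative for `z ≥ 0`. Expanding each `z^j e^{az}` into its Taylor series,
`F(z) = ∑ cₙ zⁿ / n!` where `c₀ = c₁ = c₂ = 0` and, for `n ≥ 3`,
`cₙ = 3ⁿ q₃(n) + 2ⁿ q₂(n) + q₁(n)` with polynomials `qᵢ`. These coefficients are nonnegative:
for large `n` because the `3ⁿ` term dominates, and for the finitely many others by computation.
-/

open Real Nat Finset

theorem Nat.cast_descFactorial_three {S : Type*} [Ring S] (a : ℕ) :
    (a.descFactorial 3 : S) = a * (a - 1) * (a - 2) := by
  rw [Nat.descFactorial_succ, Nat.cast_mul, Nat.cast_descFactorial_two]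
  rcases le_or_gt 2 a with h | h
  · rw [Nat.cast_sub h]
    push_cast
    noncomm_ring
  · interval_cases a <;> simp

theorem Nat.sq_mul_two_pow_le_four_mul_three_pow (n : ℕ) : n ^ 2 * 2 ^ n ≤ 4 * 3 ^ n := by
  rcases lt_or_ge n 5 with h | h
  · interval_cases n <;> norm_num
  induction n, h using Nat.le_induction with
  | base => norm_num
  | succ n hn ih =>
    calc (n + 1) ^ 2 * 2 ^ (n + 1) = 2 * (n + 1) ^ 2 * 2 ^ n := by ring
      _ ≤ 3 * n ^ 2 * 2 ^ n := Nat.mul_le_mul_right _ (by nlinarith)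
      _ = 3 * (n ^ 2 * 2 ^ n) := by ring
      _ ≤ 3 * (4 * 3 ^ n) := by gcongr
      _ = 4 * 3 ^ (n + 1) := by ring

namespace Real

theorem hasSum_descFactorial_mul_pow_div_factorial (j : ℕ) (x : ℝ) :
    HasSum (fun n ↦ n.descFactorial j * x ^ n / n !) (x ^ j * exp x) := by
  refine (hasSum_nat_add_iff' j).mp ?_
  have hexp : HasSum (fun n ↦ x ^ n / n !) (exp x) := by
    simpa [exp_eq_exp_ℝ] using NormedSpace.expSeries_div_hasSum_exp x
  have hshift (n : ℕ) :
      ((n + j).descFactorial j : ℝ) * x ^ (n + j) / (n + j)! = x ^ j * (x ^ n / n !) := by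
    have h := Nat.factorial_mul_descFactorial (Nat.le_add_left j n)
    rw [Nat.add_sub_cancel] at h
    rw [← h]
    push_cast
    field_simp
    ring
  have hlow : ∑ n ∈ range j, (n.descFactorial j : ℝ) * x ^ n / n ! = 0 :=
    sum_eq_zero fun n hn ↦ by simp [Nat.descFactorial_of_lt (mem_range.mp hn)]
  simpa [hshift, hlow] using hexp.mul_left (x ^ j)

theorem hasSum_cubic_mul_exp (a b c d x : ℝ) :
    HasSum
      (fun n : ℕ ↦ (a + b * n + c * (n * (n - 1)) + d * (n * (n - 1) * (n - 2))) * x ^ n / n !)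
      ((a + b * x + c * x ^ 2 + d * x ^ 3) * exp x) := by
  have h := (((hasSum_descFactorial_mul_pow_div_factorial 0 x).mul_left a).add
    ((hasSum_descFactorial_mul_pow_div_factorial 1 x).mul_left b)).add
    (((hasSum_descFactorial_mul_pow_div_factorial 2 x).mul_left c).add
    ((hasSum_descFactorial_mul_pow_div_factorial 3 x).mul_left d))
  rw [show (a + b * x + c * x ^ 2 + d * x ^ 3) * exp x = a * (x ^ 0 * exp x) + b * (x ^ 1 * exp x)
    + (c * (x ^ 2 * exp x) + d * (x ^ 3 * exp x)) by ring]
  refine h.congr_fun fun n ↦ ?_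
  simp only [Nat.descFactorial_zero, Nat.descFactorial_one, Nat.cast_descFactorial_two,
    Nat.cast_descFactorial_three, Nat.cast_one]
  ring

theorem sum_range_le_of_hasSum_exp_series {c : ℕ → ℝ} {z s : ℝ} {k : ℕ}
    (hs : HasSum (fun n ↦ c n * z ^ n / n !) s) (hz : 0 ≤ z) (hc : ∀ n, k ≤ n → 0 ≤ c n) :
    ∑ n ∈ range k, c n * z ^ n / n ! ≤ s :=
  sum_le_hasSum _ (fun n hn ↦ div_nonneg
    (mul_nonneg (hc n (by simpa using hn)) (pow_nonneg hz n)) (Nat.cast_nonneg _)) hs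

end Real

noncomputable def lowerCoeff (n : ℕ) : ℝ :=
  3 ^ n * (n * (n - 1) / 108 - 1) + 2 ^ n * (n * (n - 1) * (n - 2) / 8 - 5 * (n * (n - 1)) / 16 + 3)
    + (n * (n - 1) * (n - 2) + 5 * (n * (n - 1)) / 4 - 3)

noncomputable def upperCoeff (n : ℕ) : ℝ :=
  3 ^ n * (1 + n * (n - 1) / 9) - 2 ^ n * (3 + n * (n - 1) / 2 + n * (n - 1) * (n - 2) / 8)
    + (3 + 2 * (n * (n - 1)) - n * (n - 1) * (n - 2))

theorem hasSum_lowerCoeff (z : ℝ) :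
    HasSum (fun n ↦ lowerCoeff n * z ^ n / n !)
      (z ^ 2 * (exp z * ((exp z + 1) * z - exp z + 1)) - (1 - z ^ 2 / 12) * (exp z - 1) ^ 3
        - (1 - z ^ 2 / 12)) := by
  convert ((hasSum_cubic_mul_exp (-1) 0 (1 / 108) 0 (3 * z)).add
    (hasSum_cubic_mul_exp 3 0 (-5 / 16) (1 / 8) (2 * z))).add
    (hasSum_cubic_mul_exp (-3) 0 (5 / 4) 1 z) using 1
  · funext n
    simp only [lowerCoeff, mul_pow]
    ring
  · rw [show 3 * z = z + z + z by ring, show 2 * z = z + z by ring]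
    simp only [exp_add]
    ring

theorem hasSum_upperCoeff (z : ℝ) :
    HasSum (fun n ↦ upperCoeff n * z ^ n / n !)
      ((1 + z ^ 2) * (exp z - 1) ^ 3 - z ^ 2 * (exp z * ((exp z + 1) * z - exp z + 1))
        + (1 + z ^ 2)) := by
  convert ((hasSum_cubic_mul_exp 1 0 (1 / 9) 0 (3 * z)).add
    (hasSum_cubic_mul_exp (-3) 0 (-1 / 2) (-1 / 8) (2 * z))).add
    (hasSum_cubic_mul_exp 3 0 2 (-1) z) using 1
  · funext n
    simp only [upperCoeff, mul_pow]
    ring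
  · rw [show 3 * z = z + z + z by ring, show 2 * z = z + z by ring]
    simp only [exp_add]
    ring

theorem lowerCoeff_nonneg {n : ℕ} (hn : 3 ≤ n) : 0 ≤ lowerCoeff n := by
  rcases le_or_gt n 10 with h | h
  · interval_cases n <;> norm_num [lowerCoeff]
  have hx : (11 : ℝ) ≤ n := by exact_mod_cast h
  have h3 : 0 ≤ (n : ℝ) * (n - 1) / 108 - 1 := by nlinarith
  have h2 : 0 ≤ (n : ℝ) * (n - 1) * (n - 2) / 8 - 5 * (n * (n - 1)) / 16 + 3 := by nlinarith
  have h1 : 0 ≤ (n : ℝ) * (n - 1) * (n - 2) + 5 * (n * (n - 1)) / 4 - 3 := by nlinarith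
  exact add_nonneg (add_nonneg (mul_nonneg (by positivity) h3) (mul_nonneg (by positivity) h2)) h1

theorem upperCoeff_nonneg {n : ℕ} (hn : 3 ≤ n) : 0 ≤ upperCoeff n := by
  rcases le_or_gt n 9 with h | h
  · interval_cases n <;> norm_num [upperCoeff]
  have hx : (10 : ℝ) ≤ n := by exact_mod_cast h
  have hp : (8 : ℝ) ≤ 2 ^ n := by
    calc (8 : ℝ) = 2 ^ 3 := by norm_num
      _ ≤ 2 ^ n := pow_le_pow_right₀ (by norm_num) hn
  have hq : (n : ℝ) ^ 2 * 2 ^ n ≤ 4 * 3 ^ n := by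
    exact_mod_cast Nat.sq_mul_two_pow_le_four_mul_three_pow n
  have hA : 0 ≤ 1 + (n : ℝ) * (n - 1) / 9 := by nlinarith
  have hcube : 0 ≤ (n : ℝ) * (n - 1) * (n - 2) :=
    mul_nonneg (mul_nonneg (by linarith) (by linarith)) (by linarith)
  have hpoly : 0 ≤ (n : ℝ) ^ 2 * (1 + n * (n - 1) / 9) / 4 - 3 - n * (n - 1) / 2
      - n * (n - 1) * (n - 2) / 4 := by
    nlinarith [mul_nonneg (pow_nonneg (by linarith : (0 : ℝ) ≤ n) 3)
      (by linarith : (0 : ℝ) ≤ n - 10)]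
  unfold upperCoeff
  linarith [mul_le_mul_of_nonneg_right hq hA, mul_le_mul_of_nonneg_right hp hcube,
    mul_nonneg (by positivity : (0 : ℝ) ≤ 2 ^ n) hpoly,
    mul_nonneg (by linarith : (0 : ℝ) ≤ n) (by linarith : (0 : ℝ) ≤ n - 1)]

theorem one_sub_sq_div_twelve_mul_exp_sub_one_pow_three_le {z : ℝ} (hz : 0 ≤ z) :
    (1 - z ^ 2 / 12) * (exp z - 1) ^ 3 ≤ z ^ 2 * (exp z * ((exp z + 1) * z - exp z + 1)) := by
  have h := sum_range_le_of_hasSum_exp_series (k := 3) (hasSum_lowerCoeff z) hz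
    fun _ ↦ lowerCoeff_nonneg
  norm_num [sum_range_succ, lowerCoeff] at h
  linarith

theorem sq_mul_exp_le_one_add_sq_mul_exp_sub_one_pow_three {z : ℝ} (hz : 0 ≤ z) :
    z ^ 2 * (exp z * ((exp z + 1) * z - exp z + 1)) ≤ (1 + z ^ 2) * (exp z - 1) ^ 3 := by
  have h := sum_range_le_of_hasSum_exp_series (k := 3) (hasSum_upperCoeff z) hz
    fun _ ↦ upperCoeff_nonneg
  norm_num [sum_range_succ, upperCoeff] at h
  linarith

/-- For every `z > 0`, `1/z² - 1/12 ≤ e^z((e^z+1)z - e^z + 1)/(e^z-1)³ ≤ 1/z² + 1`. -/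
theorem exp_inequality_two (z : ℝ) (hz : 0 < z) :
    1 / z ^ 2 - 1 / 12 ≤
        Real.exp z * ((Real.exp z + 1) * z - Real.exp z + 1) / (Real.exp z - 1) ^ 3 ∧
      Real.exp z * ((Real.exp z + 1) * z - Real.exp z + 1) / (Real.exp z - 1) ^ 3 ≤
        1 / z ^ 2 + 1 := by
  have hD : 0 < (exp z - 1) ^ 3 := pow_pos (sub_pos.mpr (one_lt_exp_iff.mpr hz)) 3
  have hz2 : 0 < z ^ 2 := by positivity
  constructor
  · rw [le_div_iff₀ hD, ← mul_le_mul_iff_of_pos_left hz2]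
    calc z ^ 2 * ((1 / z ^ 2 - 1 / 12) * (exp z - 1) ^ 3)
        = (1 - z ^ 2 / 12) * (exp z - 1) ^ 3 := by field_simp
      _ ≤ _ := one_sub_sq_div_twelve_mul_exp_sub_one_pow_three_le hz.le
  · rw [div_le_iff₀ hD, ← mul_le_mul_iff_of_pos_left hz2]
    calc z ^ 2 * (exp z * ((exp z + 1) * z - exp z + 1))
        ≤ (1 + z ^ 2) * (exp z - 1) ^ 3 :=
          sq_mul_exp_le_one_add_sq_mul_exp_sub_one_pow_three hz.le
      _ = z ^ 2 * ((1 / z ^ 2 + 1) * (exp z - 1) ^ 3) := by field_simp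
end

section
/- For every real z with 0 < z < 1, e^{3z}/(e^z − 1)⁴ ≤ 3/z⁴; equivalently, e^{−z}/(1 − e^{−z})⁴ ≤ 3/z⁴. -/
/-!
Writing `e^z - 1 = 2 sinh (z/2) e^{z/2}` and using `sinh t ≥ t` for `t ≥ 0` gives
`(e^z - 1)⁴ ≥ z⁴ e^{2z}`, hence `e^{3z}/(e^z - 1)⁴ ≤ e^z/z⁴ < 3/z⁴` because `e^z < e < 3`.
The second form is the first one with numerator and denominator multiplied by `e^{4z}`.
-/

open Real

namespace Real

theorem exp_sub_one_eq_two_mul_sinh_half_mul_exp_half (z : ℝ) :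
    exp z - 1 = 2 * sinh (z / 2) * exp (z / 2) := by
  rw [sinh_eq, mul_div_cancel₀ _ two_ne_zero, sub_mul, ← exp_add, ← exp_add, add_halves,
    neg_add_cancel, exp_zero]

theorem mul_exp_half_le_exp_sub_one {z : ℝ} (hz : 0 ≤ z) : z * exp (z / 2) ≤ exp z - 1 := by
  have hsinh : z / 2 ≤ sinh (z / 2) := self_le_sinh_iff.mpr (by positivity)
  rw [exp_sub_one_eq_two_mul_sinh_half_mul_exp_half]
  exact mul_le_mul_of_nonneg_right (by linarith) (exp_pos _).le

theorem exp_three_mul_div_exp_sub_one_pow_four_le {z : ℝ} (hz : 0 < z) :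
    exp (3 * z) / (exp z - 1) ^ 4 ≤ exp z / z ^ 4 := by
  have hpow : (z * exp (z / 2)) ^ 4 ≤ (exp z - 1) ^ 4 :=
    pow_le_pow_left₀ (by positivity) (mul_exp_half_le_exp_sub_one hz.le) 4
  have hsq : (z * exp (z / 2)) ^ 4 = z ^ 4 * exp (2 * z) := by
    rw [mul_pow, ← exp_nat_mul]
    ring_nf
  calc exp (3 * z) / (exp z - 1) ^ 4
      ≤ exp (3 * z) / (z ^ 4 * exp (2 * z)) := by
        rw [← hsq]
        exact div_le_div_of_nonneg_left (exp_pos _).le (by positivity) hpow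
    _ = exp z / z ^ 4 := by
        rw [div_mul_eq_div_div_swap, ← exp_sub]
        ring_nf

theorem exp_neg_div_one_sub_exp_neg_pow_four (z : ℝ) :
    exp (-z) / (1 - exp (-z)) ^ 4 = exp (3 * z) / (exp z - 1) ^ 4 := by
  have hfactor : 1 - exp (-z) = exp (-z) * (exp z - 1) := by
    rw [mul_sub, ← exp_add, neg_add_cancel, exp_zero, mul_one]
  rw [hfactor, mul_pow, ← div_div, ← exp_nat_mul, ← exp_sub]
  ring_nf

end Real

/-- For `0 < z < 1`, `e^{3z}/(e^z - 1)⁴ ≤ 3/z⁴`; equivalently `e^{-z}/(1 - e^{-z})⁴ ≤ 3/z⁴`. -/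
theorem exp_inequality_three (z : ℝ) (hz : 0 < z) (hz' : z < 1) :
    Real.exp (3 * z) / (Real.exp z - 1) ^ 4 ≤ 3 / z ^ 4 ∧
      Real.exp (-z) / (1 - Real.exp (-z)) ^ 4 ≤ 3 / z ^ 4 := by
  have hexp : exp z < 3 := (exp_lt_exp.mpr hz').trans exp_one_lt_three
  have hfirst : exp (3 * z) / (exp z - 1) ^ 4 ≤ 3 / z ^ 4 :=
    (exp_three_mul_div_exp_sub_one_pow_four_le hz).trans
      (div_le_div_of_nonneg_right hexp.le (by positivity))
  exact ⟨hfirst, exp_neg_div_one_sub_exp_neg_pow_four z ▸ hfirst⟩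
end

section
/- For every real z > 0, 1 ≤ ((e^z + 1)·z − e^z + 1)/(e^z − 1) ≤ 1 + z². -/
open Real

lemma aux_lower (z : ℝ) (hz : 0 < z) : 0 ≤ (z-2) * Real.exp z + z + 2 := by
  have key : ∀ x : ℝ, Real.exp x * Real.exp (-x) = 1 := fun x => by
    rw [← Real.exp_add]; simp
  set f : ℝ → ℝ := fun x => (x-2) * Real.exp x + x + 2 with hf
  have hderiv : ∀ x : ℝ, HasDerivAt f ((x-1) * Real.exp x + 1) x := by
    intro x
    have h1 : HasDerivAt (fun x : ℝ => (x-2) * Real.exp x)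
        (1 * Real.exp x + (x-2) * Real.exp x) x :=
      ((hasDerivAt_id x).sub_const 2).mul (Real.hasDerivAt_exp x)
    have h2 : HasDerivAt (fun x : ℝ => (x-2) * Real.exp x + x + 2)
        ((1 * Real.exp x + (x-2) * Real.exp x) + 1) x := by
      simpa using (h1.add (hasDerivAt_id x)).add_const 2
    convert h2 using 1
    ring
  have hmono : MonotoneOn f (Set.Ici (0:ℝ)) := by
    apply monotoneOn_of_deriv_nonneg (convex_Ici 0)
    · exact Continuous.continuousOn (by fun_prop)
    · intro x hx
      exact (hderiv x).differentiableAt.differentiableWithinAt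
    · intro x hx
      rw [(hderiv x).deriv]
      have hx0 : 0 ≤ x := by
        simp only [interior_Ici, Set.mem_Ioi] at hx
        exact hx.le
      nlinarith [key x, Real.add_one_le_exp (-x), Real.exp_pos x]
  have h0 : f 0 = 0 := by simp [hf]
  have := hmono (Set.self_mem_Ici) (Set.mem_Ici.2 hz.le) hz.le
  rw [h0] at this
  simpa [hf] using this

lemma aux_cubic (z : ℝ) (hz : 0 ≤ z) : 1 + z + z^2/2 + z^3/6 ≤ Real.exp z := by
  have := Real.sum_le_exp_of_nonneg hz 4
  simp [Finset.sum_range_succ, Nat.factorial] at this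
  nlinarith [this]

/-- For every `z > 0`, `1 ≤ ((e^z + 1)z - e^z + 1)/(e^z - 1) ≤ 1 + z²`. -/
theorem exp_inequality_four (z : ℝ) (hz : 0 < z) :
    1 ≤ ((Real.exp z + 1) * z - Real.exp z + 1) / (Real.exp z - 1) ∧
      ((Real.exp z + 1) * z - Real.exp z + 1) / (Real.exp z - 1) ≤ 1 + z ^ 2 := by
  have hd : 0 < Real.exp z - 1 := by
    have := Real.add_one_lt_exp (ne_of_gt hz)
    linarith
  constructor
  · rw [le_div_iff₀ hd]
    have := aux_lower z hz
    nlinarith [this]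
  · rw [div_le_iff₀ hd]
    have h3 := aux_cubic z hz.le
    nlinarith [h3, pow_pos hz 3, pow_pos hz 4, pow_pos hz 5]
end

section
/- As δ → 0⁺, the integral ∫_1^∞ e^{−δ·x·log(x)} dx is asymptotic to δ^{-1}/log(1/δ), i.e. the ratio of the integral to δ^{-1}/log(1/δ) tends to 1 as δ → 0⁺. -/
open Filter Real MeasureTheory Set Topology Asymptotics

/-!
Write `δ = e^{-L}`, so that `δ⁻¹ / log (1/δ) = e^L / L`. Since `log` is monotone, on either side
of a cut-off `X` the integrand compares with `e^{-δ log X · x}`, whose integrals are explicit.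
Cutting at `X = L e^L` bounds the integral from below by `∫_1^X e^{-δ log X · x} dx`, and cutting
at `Y = e^L / L²` (bounding the integrand by `1` before `Y`) bounds it from above by
`Y + 1 / (δ log Y)`. After multiplying by `L e^{-L}`, both bounds tend to `1`
because `log L = o(L)`.
-/

noncomputable def expNegMulLogIntegral (δ : ℝ) : ℝ :=
  ∫ x in Ioi (1 : ℝ), exp (-(δ * x * log x))

section Integrand

variable {δ x : ℝ}

theorem exp_neg_mul_mul_log_le_one (hδ : 0 ≤ δ) (hx : 1 ≤ x) :
    exp (-(δ * x * log x)) ≤ 1 := by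
  have := log_nonneg hx
  exact exp_le_one_iff.2 (neg_nonpos.2 (by positivity))

theorem exp_neg_mul_mul_log_le_of_le {Y : ℝ} (hδ : 0 ≤ δ) (hY : 0 < Y) (hYx : Y ≤ x) :
    exp (-(δ * x * log x)) ≤ exp (-(δ * log Y) * x) := by
  have := mul_le_mul_of_nonneg_left (log_le_log hY hYx) (mul_nonneg hδ (hY.le.trans hYx))
  rw [exp_le_exp]
  linarith

theorem exp_neg_mul_log_mul_le_of_le {X : ℝ} (hδ : 0 ≤ δ) (hx : 0 < x) (hxX : x ≤ X) :
    exp (-(δ * log X) * x) ≤ exp (-(δ * x * log x)) := by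
  have := mul_le_mul_of_nonneg_left (log_le_log hx hxX) (by positivity : 0 ≤ δ * x)
  rw [exp_le_exp]
  linarith

theorem continuous_exp_neg_mul_mul_log (δ : ℝ) :
    Continuous fun x => exp (-(δ * x * log x)) := by
  simp_rw [mul_assoc]
  fun_prop

theorem integrableOn_exp_neg_mul_mul_log (hδ : 0 < δ) :
    IntegrableOn (fun x => exp (-(δ * x * log x))) (Ioi 1) := by
  refine integrable_of_isBigO_exp_neg hδ (continuous_exp_neg_mul_mul_log δ).continuousOn ?_
  refine IsBigO.of_bound 1 ?_
  filter_upwards [eventually_ge_atTop (exp 1)] with x hx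
  simpa [abs_of_pos (exp_pos _)] using
    exp_neg_mul_mul_log_le_of_le hδ.le (exp_pos 1) hx

theorem exp_neg_sub_exp_neg_le_mul_expNegMulLogIntegral {X : ℝ} (hδ : 0 < δ) (hX : 1 < X) :
    exp (-(δ * log X)) - exp (-(δ * log X) * X) ≤ δ * log X * expNegMulLogIntegral δ := by
  set b := δ * log X
  have hb : 0 < b := mul_pos hδ (log_pos hX)
  have hf := integrableOn_exp_neg_mul_mul_log hδ
  calc exp (-b) - exp (-b * X) = b * ∫ x in (1 : ℝ)..X, exp (-b * x) := by
        rw [← intervalIntegral.integral_Ioi_sub_Ioi (exp_neg_integrableOn_Ioi 1 hb) hX.le,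
          integral_exp_mul_Ioi (neg_neg_of_pos hb), integral_exp_mul_Ioi (neg_neg_of_pos hb)]
        field_simp
    _ ≤ b * ∫ x in (1 : ℝ)..X, exp (-(δ * x * log x)) := by
        gcongr
        exact intervalIntegral.integral_mono_on hX.le
          ((by fun_prop : Continuous fun x => exp (-b * x)).intervalIntegrable _ _)
          ((continuous_exp_neg_mul_mul_log δ).intervalIntegrable _ _)
          fun x hx => exp_neg_mul_log_mul_le_of_le hδ.le (by linarith [hx.1]) hx.2
    _ ≤ b * expNegMulLogIntegral δ := by
        gcongr
        have htail : 0 ≤ ∫ x in Ioi X, exp (-(δ * x * log x)) :=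
          integral_nonneg fun x => (exp_pos _).le
        rw [expNegMulLogIntegral, ← intervalIntegral.integral_interval_add_Ioi hf
          (hf.mono_set (Ioi_subset_Ioi hX.le))]
        linarith

theorem expNegMulLogIntegral_le {Y : ℝ} (hδ : 0 < δ) (hY : 1 < Y) :
    expNegMulLogIntegral δ ≤ Y + (δ * log Y)⁻¹ := by
  set c := δ * log Y
  have hc : 0 < c := mul_pos hδ (log_pos hY)
  have hf := integrableOn_exp_neg_mul_mul_log hδ
  have hfY := hf.mono_set (Ioi_subset_Ioi hY.le)
  have head : ∫ x in (1 : ℝ)..Y, exp (-(δ * x * log x)) ≤ Y := by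
    calc _ ≤ ∫ _ in (1 : ℝ)..Y, (1 : ℝ) :=
          intervalIntegral.integral_mono_on hY.le
            ((continuous_exp_neg_mul_mul_log δ).intervalIntegrable _ _) intervalIntegrable_const
            fun x hx => exp_neg_mul_mul_log_le_one hδ.le hx.1
      _ ≤ Y := by simp
  have tail : ∫ x in Ioi Y, exp (-(δ * x * log x)) ≤ c⁻¹ := by
    calc _ ≤ ∫ x in Ioi Y, exp (-c * x) :=
          setIntegral_mono_on hfY (exp_neg_integrableOn_Ioi Y hc) measurableSet_Ioi
            fun x hx => exp_neg_mul_mul_log_le_of_le hδ.le (by linarith) (le_of_lt hx)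
      _ = exp (-c * Y) * c⁻¹ := by
          rw [integral_exp_mul_Ioi (neg_neg_of_pos hc), neg_div_neg_eq, div_eq_mul_inv]
      _ ≤ c⁻¹ := mul_le_of_le_one_left (inv_nonneg.2 hc.le) (exp_le_one_iff.2 (by nlinarith))
  rw [expNegMulLogIntegral, ← intervalIntegral.integral_interval_add_Ioi hf hfY]
  exact add_le_add head tail

end Integrand

theorem tendsto_add_mul_log_div_self_atTop (a : ℝ) :
    Tendsto (fun L => (L + a * log L) / L) atTop (𝓝 1) := by
  have h := (isLittleO_log_id_atTop.tendsto_div_nhds_zero.const_mul a).const_add 1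
  rw [mul_zero, add_zero] at h
  refine h.congr' ?_
  filter_upwards [eventually_ne_atTop 0] with L hL
  simp only [id_eq]
  field_simp

theorem tendsto_add_mul_log_atTop (a : ℝ) : Tendsto (fun L => L + a * log L) atTop atTop := by
  refine (tendsto_id.atTop_mul_pos one_pos (tendsto_add_mul_log_div_self_atTop a)).congr' ?_
  filter_upwards [eventually_ne_atTop 0] with L hL
  exact mul_div_cancel₀ _ hL

theorem tendsto_div_add_mul_log_atTop (a : ℝ) :
    Tendsto (fun L => L / (L + a * log L)) atTop (𝓝 1) := by
  simpa using (tendsto_add_mul_log_div_self_atTop a).inv₀ one_ne_zero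

section LogScale

variable {L : ℝ}

theorem le_mul_exp_neg_mul_expNegMulLogIntegral (hL : 1 ≤ L) :
    (exp (-(exp (-L) * (L + log L))) - exp (-(L * (L + log L)))) * (L / (L + log L)) ≤
      L * exp (-L) * expNegMulLogIntegral (exp (-L)) := by
  have hX : 1 < L * exp L := one_lt_mul_of_le_of_lt hL (one_lt_exp_iff.2 (by linarith))
  have hlogX : log (L * exp L) = L + log L := by
    rw [log_mul (by positivity) (exp_pos L).ne', log_exp, add_comm]
  have hbX : exp (-L) * (L + log L) * (L * exp L) = L * (L + log L) := by
    rw [exp_neg]; field_simp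
  have key := exp_neg_sub_exp_neg_le_mul_expNegMulLogIntegral (exp_pos (-L)) hX
  rw [hlogX, neg_mul, hbX] at key
  have hpos : 0 < L + log L := by linarith [log_nonneg hL]
  calc _ ≤ exp (-L) * (L + log L) * expNegMulLogIntegral (exp (-L)) * (L / (L + log L)) :=
        mul_le_mul_of_nonneg_right key (by positivity)
    _ = _ := by field_simp

theorem mul_exp_neg_mul_expNegMulLogIntegral_le (hL : 0 < L) (hLlog : 0 < L - 2 * log L) :
    L * exp (-L) * expNegMulLogIntegral (exp (-L)) ≤ L⁻¹ + L / (L - 2 * log L) := by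
  have hlogY : log (exp L / L ^ 2) = L - 2 * log L := by
    rw [log_div (exp_pos L).ne' (by positivity), log_exp, log_pow]
    push_cast
    ring
  have hY : 1 < exp L / L ^ 2 := by
    rw [← log_pos_iff (by positivity), hlogY]
    exact hLlog
  have key := expNegMulLogIntegral_le (exp_pos (-L)) hY
  rw [hlogY] at key
  calc _ ≤ L * exp (-L) * (exp L / L ^ 2 + (exp (-L) * (L - 2 * log L))⁻¹) := by gcongr
    _ = _ := by
        rw [exp_neg]
        field_simp

end LogScale

theorem tendsto_mul_exp_neg_mul_expNegMulLogIntegral :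
    Tendsto (fun L => L * exp (-L) * expNegMulLogIntegral (exp (-L))) atTop (𝓝 1) := by
  have hmul_exp : Tendsto (fun L => L * exp (-L)) atTop (𝓝 0) := by
    simpa using tendsto_pow_mul_exp_neg_atTop_nhds_zero 1
  have hb : Tendsto (fun L => exp (-L) * (L + log L)) atTop (𝓝 0) := by
    have := hmul_exp.mul (tendsto_add_mul_log_div_self_atTop 1)
    rw [zero_mul] at this
    refine this.congr' ?_
    filter_upwards [eventually_ne_atTop 0] with L hL
    field_simp
  have hlower : Tendsto (fun L => (exp (-(exp (-L) * (L + log L))) - exp (-(L * (L + log L)))) *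
      (L / (L + log L))) atTop (𝓝 1) := by
    have h1 : Tendsto (fun L => exp (-(exp (-L) * (L + log L)))) atTop (𝓝 1) :=
      tendsto_exp_nhds_zero_nhds_one.comp (neg_zero (G := ℝ) ▸ hb.neg)
    have h2 : Tendsto (fun L => exp (-(L * (L + log L)))) atTop (𝓝 0) :=
      tendsto_exp_neg_atTop_nhds_zero.comp
        (tendsto_id.atTop_mul_atTop₀ (by simpa using tendsto_add_mul_log_atTop 1))
    simpa using (h1.sub h2).mul (by simpa using tendsto_div_add_mul_log_atTop 1)
  have hupper : Tendsto (fun L => L⁻¹ + L / (L - 2 * log L)) atTop (𝓝 1) := by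
    simpa [sub_eq_add_neg] using tendsto_inv_atTop_zero.add (tendsto_div_add_mul_log_atTop (-2))
  refine tendsto_of_tendsto_of_tendsto_of_le_of_le' hlower hupper ?_ ?_
  · filter_upwards [eventually_ge_atTop 1] with L hL
      using le_mul_exp_neg_mul_expNegMulLogIntegral hL
  · filter_upwards [eventually_gt_atTop 0,
      (tendsto_add_mul_log_atTop (-2)).eventually_gt_atTop 0] with L hL hLlog
    exact mul_exp_neg_mul_expNegMulLogIntegral_le hL (by linarith)

/-- `∫_1^∞ e^{-δ x log x} dx ~ δ⁻¹/log(1/δ)` as `δ → 0⁺`. -/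
theorem integral_exp_asymptotics :
    Filter.Tendsto
      (fun δ : ℝ =>
        (∫ x in Set.Ioi (1 : ℝ), Real.exp (-(δ * x * Real.log x))) /
          (δ⁻¹ / Real.log (1 / δ)))
      (nhdsWithin 0 (Set.Ioi 0)) (nhds 1) := by
  have hlog : Tendsto (fun δ : ℝ => log (1 / δ)) (𝓝[>] 0) atTop := by
    simpa using tendsto_log_nhdsGT_zero
  refine (tendsto_mul_exp_neg_mul_expNegMulLogIntegral.comp hlog).congr' ?_
  filter_upwards [self_mem_nhdsWithin] with δ (hδ : 0 < δ)
  simp only [Function.comp_apply, one_div, log_inv, neg_neg, exp_log hδ, expNegMulLogIntegral]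
  field_simp
end

section
/- For every real constant C > 0 and every ε > 0, there exists δ₀ > 0 such that for all 0 < δ < δ₀, (1 − ε/4)/log(1/δ) ≤ ∫_{2δC}^∞ z·e^{−z}/log(z/(C·δ)) dz ≤ (1 + ε/4)/log(1/δ). -/
/-!
Since `log (z / (C δ)) = log (1 / δ) + log z - log C`, the weight `log (1 / δ) / log (z / (C δ))`
on `z > c C δ` (any `c > 1`) tends to `1` as `δ → 0⁺` and is bounded by
`1 + (|log C| + |log z|) / log c`. Dominated convergence therefore gives
`log (1 / δ) * ∫_{cCδ}^∞ f z / log (z / (C δ)) dz → ∫_0^∞ f` whenever `f` and `f * log` are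
integrable on `(0, ∞)`. For `f z = z e^{-z}` the limit is `Γ(2) = 1`, and the two bounds say that
`log (1 / δ)` times the integral is within `ε / 4` of this limit.
-/

open Filter Real MeasureTheory Set Topology

lemma log_one_div_eq_log_div_add {z C δ : ℝ} (hz : 0 < z) (hC : 0 < C) (hδ : 0 < δ) :
    log (1 / δ) = log (z / (C * δ)) + (log C - log z) := by
  rw [log_div hz.ne' (by positivity), log_mul hC.ne' hδ.ne', one_div, log_inv]
  ring

lemma abs_log_one_div_div_log_div_le {z C δ c : ℝ} (hC : 0 < C) (hδ : 0 < δ) (hc : 1 < c)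
    (hz : c * δ * C < z) :
    |log (1 / δ) / log (z / (C * δ))| ≤ 1 + (|log C| + |log z|) / log c := by
  have hz0 : 0 < z := by nlinarith [mul_pos hδ hC]
  have hlogc : 0 < log c := log_pos hc
  have hℓ : log c ≤ log (z / (C * δ)) :=
    log_le_log (by linarith) (by rw [le_div_iff₀ (by positivity)]; linarith)
  rw [log_one_div_eq_log_div_add hz0 hC hδ, add_div, div_self (by linarith)]
  calc |1 + (log C - log z) / log (z / (C * δ))|
      ≤ |1| + |(log C - log z) / log (z / (C * δ))| := abs_add_le _ _
    _ = 1 + |log C - log z| / log (z / (C * δ)) := by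
        rw [abs_one, abs_div, abs_of_pos (hlogc.trans_le hℓ)]
    _ ≤ 1 + (|log C| + |log z|) / log c := by
        gcongr
        exact abs_sub _ _

lemma tendsto_log_one_div_div_log_div {z C : ℝ} (hz : 0 < z) (hC : 0 < C) :
    Tendsto (fun δ => log (1 / δ) / log (z / (C * δ))) (𝓝[>] 0) (𝓝 1) := by
  have hratio : Tendsto (fun δ => z / (C * δ)) (𝓝[>] 0) atTop := by
    refine (tendsto_inv_nhdsGT_zero.const_mul_atTop (div_pos hz hC)).congr fun δ => ?_
    field_simp
  have hℓ := tendsto_log_atTop.comp hratio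
  have hk : Tendsto (fun δ => 1 + (log C - log z) / log (z / (C * δ))) (𝓝[>] 0) (𝓝 (1 + 0)) :=
    tendsto_const_nhds.add (tendsto_const_nhds.div_atTop hℓ)
  rw [add_zero] at hk
  refine hk.congr' ?_
  filter_upwards [self_mem_nhdsWithin, hℓ.eventually_gt_atTop 0] with δ (hδ : 0 < δ)
    (hpos : 0 < log (z / (C * δ)))
  rw [log_one_div_eq_log_div_add hz hC hδ, add_div, div_self hpos.ne']

lemma abs_indicator_log_one_div_div_log_div_le {C δ c : ℝ} (hC : 0 < C) (hδ : 0 < δ) (hc : 1 < c)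
    (z : ℝ) :
    |(Ioi (c * δ * C)).indicator (fun z => log (1 / δ) / log (z / (C * δ))) z| ≤
      1 + (|log C| + |log z|) / log c := by
  by_cases hz : c * δ * C < z
  · rw [indicator_of_mem (show z ∈ Ioi (c * δ * C) from hz)]
    exact abs_log_one_div_div_log_div_le hC hδ hc hz
  · rw [indicator_of_notMem (show z ∉ Ioi (c * δ * C) from hz), abs_zero]
    have := log_pos hc
    positivity

lemma tendsto_indicator_log_one_div_div_log_div {z C : ℝ} (hz : 0 < z) (hC : 0 < C) (c : ℝ) :
    Tendsto (fun δ => (Ioi (c * δ * C)).indicator (fun z => log (1 / δ) / log (z / (C * δ))) z)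
      (𝓝[>] 0) (𝓝 1) := by
  have hlower : Tendsto (fun δ => c * δ * C) (𝓝[>] 0) (𝓝 0) :=
    tendsto_nhdsWithin_of_tendsto_nhds <|
      (by fun_prop : Continuous fun δ : ℝ => c * δ * C).tendsto' 0 0 (by simp)
  refine (tendsto_log_one_div_div_log_div hz hC).congr' ?_
  filter_upwards [hlower.eventually_lt_const hz] with δ hδ
  rw [indicator_of_mem (show z ∈ Ioi (c * δ * C) from hδ)]

theorem tendsto_log_one_div_mul_setIntegral_div_log {f : ℝ → ℝ} {C c : ℝ} (hC : 0 < C)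
    (hc : 1 < c) (hf : IntegrableOn f (Ioi 0))
    (hflog : IntegrableOn (fun z => f z * log z) (Ioi 0)) :
    Tendsto (fun δ => log (1 / δ) * ∫ z in Ioi (c * δ * C), f z / log (z / (C * δ)))
      (𝓝[>] 0) (𝓝 (∫ z in Ioi 0, f z)) := by
  set w : ℝ → ℝ → ℝ := fun δ =>
    (Ioi (c * δ * C)).indicator fun z => log (1 / δ) / log (z / (C * δ))
  set bound : ℝ → ℝ := fun z => (1 + (|log C| + |log z|) / log c) * ‖f z‖
  have hbound : IntegrableOn bound (Ioi 0) := by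
    refine IntegrableOn.congr_fun ((hf.norm.const_mul (1 + |log C| / log c)).add
      (hflog.norm.div_const (log c))) (fun z _ => ?_) measurableSet_Ioi
    simp only [bound, Pi.add_apply, norm_mul, norm_eq_abs]
    ring
  have hw_meas (δ : ℝ) : Measurable (w δ) :=
    (by fun_prop : Measurable fun z => log (1 / δ) / log (z / (C * δ))).indicator measurableSet_Ioi
  have hdominated : ∀ᶠ δ in 𝓝[>] 0, ∀ᵐ z ∂volume.restrict (Ioi 0), ‖w δ z * f z‖ ≤ bound z := by
    filter_upwards [self_mem_nhdsWithin] with δ (hδ : 0 < δ)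
    refine Eventually.of_forall fun z => ?_
    rw [norm_mul, norm_eq_abs]
    exact mul_le_mul_of_nonneg_right (abs_indicator_log_one_div_div_log_div_le hC hδ hc z)
      (norm_nonneg _)
  have hpointwise : ∀ᵐ z ∂volume.restrict (Ioi 0), Tendsto (w · z * f z) (𝓝[>] 0) (𝓝 (f z)) := by
    filter_upwards [ae_restrict_mem measurableSet_Ioi] with z (hz : 0 < z)
    simpa only [one_mul] using (tendsto_indicator_log_one_div_div_log_div hz hC c).mul_const (f z)
  refine (tendsto_integral_filter_of_dominated_convergence bound
    (.of_forall fun δ => (hw_meas δ).aestronglyMeasurable.mul hf.aestronglyMeasurable)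
    hdominated hbound hpointwise).congr' ?_
  filter_upwards [self_mem_nhdsWithin] with δ (hδ : 0 < δ)
  simp_rw [Pi.mul_apply, w, ← indicator_mul_left]
  rw [integral_indicator measurableSet_Ioi, Measure.restrict_restrict measurableSet_Ioi,
    inter_eq_left.mpr (Ioi_subset_Ioi (by positivity)), ← integral_const_mul]
  congr 1 with z
  ring

lemma abs_mul_log_le_sq_add_one {z : ℝ} (hz : 0 < z) : |z * log z| ≤ z ^ 2 + 1 := by
  have hupper : log z ≤ z - 1 := log_le_sub_one_of_pos hz
  have hlower : 1 - z⁻¹ ≤ log z := one_sub_inv_le_log_of_pos hz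
  have : z * (1 - z⁻¹) = z - 1 := by field_simp
  rw [abs_le]
  constructor <;> nlinarith [mul_le_mul_of_nonneg_left hlower hz.le]

lemma integrableOn_pow_mul_exp_neg_Ioi (n : ℕ) :
    IntegrableOn (fun z : ℝ => z ^ n * exp (-z)) (Ioi 0) := by
  simpa using integrableOn_rpow_mul_exp_neg_rpow (s := n) (p := 1)
    (by linarith [n.cast_nonneg (α := ℝ)]) one_pos

lemma integrableOn_mul_exp_neg_mul_log_Ioi :
    IntegrableOn (fun z : ℝ => z * exp (-z) * log z) (Ioi 0) := by
  refine ((integrableOn_pow_mul_exp_neg_Ioi 2).add (integrableOn_pow_mul_exp_neg_Ioi 0)).mono'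
    (by fun_prop) ?_
  filter_upwards [ae_restrict_mem measurableSet_Ioi] with z (hz : 0 < z)
  rw [norm_eq_abs, mul_right_comm, abs_mul, abs_of_pos (exp_pos _), Pi.add_apply, pow_zero,
    one_mul, ← add_one_mul]
  exact mul_le_mul_of_nonneg_right (abs_mul_log_le_sq_add_one hz) (exp_pos _).le

lemma integral_mul_exp_neg_Ioi : ∫ z in Ioi (0 : ℝ), z * exp (-z) = 1 := by
  have h := integral_rpow_mul_exp_neg_mul_Ioi (a := 2) (r := 1) two_pos one_pos
  norm_num at h
  simpa using h

/-- For every `C > 0` and `ε > 0` there is `δ₀ > 0` such that for all `0 < δ < δ₀`,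
`(1 - ε/4)/log(1/δ) ≤ ∫_{2δC}^∞ z e^{-z}/log(z/(Cδ)) dz ≤ (1 + ε/4)/log(1/δ)`. -/
theorem integral_z_exp_bounds (C ε : ℝ) (hC : 0 < C) (hε : 0 < ε) :
    ∃ δ₀ : ℝ, 0 < δ₀ ∧ ∀ δ : ℝ, 0 < δ → δ < δ₀ →
      (1 - ε / 4) / Real.log (1 / δ) ≤
          (∫ z in Set.Ioi (2 * δ * C), z * Real.exp (-z) / Real.log (z / (C * δ))) ∧
        (∫ z in Set.Ioi (2 * δ * C), z * Real.exp (-z) / Real.log (z / (C * δ))) ≤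
          (1 + ε / 4) / Real.log (1 / δ) := by
  have hlim := tendsto_log_one_div_mul_setIntegral_div_log hC one_lt_two
    (by simpa using integrableOn_pow_mul_exp_neg_Ioi 1) integrableOn_mul_exp_neg_mul_log_Ioi
  rw [integral_mul_exp_neg_Ioi] at hlim
  have hnear := (Metric.tendsto_nhds.mp hlim) (ε / 4) (by positivity)
  have hlog_pos : ∀ᶠ δ in 𝓝[>] (0 : ℝ), 0 < log (1 / δ) :=
    (tendsto_log_atTop.comp (tendsto_inv_nhdsGT_zero.congr fun δ => (one_div δ).symm)
      ).eventually_gt_atTop 0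
  obtain ⟨δ₀, hδ₀, hδ₀_spec⟩ := (nhdsGT_basis 0).eventually_iff.mp (hnear.and hlog_pos)
  refine ⟨δ₀, hδ₀, fun δ hδ hδδ₀ => ?_⟩
  obtain ⟨hclose, hL⟩ := hδ₀_spec ⟨hδ, hδδ₀⟩
  rw [Real.dist_eq, abs_sub_lt_iff] at hclose
  rw [div_le_iff₀ hL, le_div_iff₀ hL]
  constructor <;> linarith
end
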